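/- arXiv:1305.0602 — 7 statements merged into one kernel-verified Lean document; each statement's English description precedes it below -/
import Mathlib

section
/- For m ≥ 0, α_{m,2m} = 1, where α_{m,n} = Σ_{k=0}^{m} (-1)^k [2m+1 choose k] [2m+n-2k+1 choose 2n+1] with quantum binomial coefficients. -/
open Finset LaurentPolynomial

noncomputable section

/-- `ℤ[q^{1/2}, q^{-1/2}]`, with `T 1` representing `q^{1/2}` (so `q = T 2`). -/
abbrev R : Type := LaurentPolynomial ℤ

/-- quantum integer `{i} = q^{i/2} - q^{-i/2}`. -/
def qint (i : ℤ) : R := T i - T (-i)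

/-- falling product `{i}_n = {i}{i-1}⋯{i-n+1}`. -/
def qfall (i : ℤ) (n : ℕ) : R := ∏ k ∈ Finset.range n, qint (i - k)

/-- quantum factorial `{n}! = {n}_n`. -/
def qfact (n : ℕ) : R := qfall n n

/-- balanced quantum binomial `[i choose n] = {i}_n / {n}!`,
defined inside `R` via the Pascal-type recursion
`[i+1 choose n+1] = q^{-(i-n)/2}[i choose n] + q^{(n+1)/2}[i choose n+1]`. -/
def qbinom : ℕ → ℕ → R
  | _, 0 => 1
  | 0, _ + 1 => 0
  | i + 1, n + 1 => T (-((i : ℤ) - n)) * qbinom i n + T ((n : ℤ) + 1) * qbinom i (n + 1)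

/-- `α_{m,n} = Σ_{k=0}^{m} (-1)^k [2m+1 choose k][2m+n-2k+1 choose 2n+1]`. -/
def qalpha (m n : ℕ) : R :=
  ∑ k ∈ Finset.range (m + 1),
    (-1 : R) ^ k * qbinom (2 * m + 1) k * qbinom (2 * m + n + 1 - 2 * k) (2 * n + 1)

/-- symmetric cyclotomic polynomial `Φ̃_l = q^{-φ(l)/2} Φ_l(q)
  = ∏_{d ∣ l} (q^{d/2} - q^{-d/2})^{μ(l/d)}`. -/
def qcyc (l : ℕ) : R :=
  T (-(Nat.totient l : ℤ)) *
    Polynomial.eval₂ (Int.castRingHom R) (T 2) (Polynomial.cyclotomic l ℤ)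

lemma qbinom_lt : ∀ i n : ℕ, i < n → qbinom i n = 0 := by
  intro i
  induction i with
  | zero => intro n h; cases n with
    | zero => omega
    | succ n => rfl
  | succ i ih =>
    intro n h
    cases n with
    | zero => omega
    | succ n =>
      rw [qbinom, ih n (by omega), ih (n+1) (by omega), mul_zero, mul_zero, add_zero]

lemma qbinom_self : ∀ i : ℕ, qbinom i i = 1 := by
  intro i
  induction i with
  | zero => rfl
  | succ i ih =>
    rw [qbinom, ih, qbinom_lt i (i+1) i.lt_succ_self, mul_zero, add_zero, mul_one]
    simp

/-- `α_{m,2m} = 1`. -/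
theorem stmt_2 (m : ℕ) : qalpha m (2 * m) = 1 := by
  rw [qalpha]
  rw [Finset.sum_eq_single 0]
  · simp only [pow_zero, one_mul, Nat.mul_zero, Nat.sub_zero]
    have h1 : 2 * m + (2 * m) + 1 = 2 * (2 * m) + 1 := by ring
    rw [h1, qbinom_self]
    show (1 : R) * 1 = 1
    rw [mul_one]
  · intro k _ hk
    have : 2 * m + 2 * m + 1 - 2 * k < 2 * (2 * m) + 1 := by omega
    rw [qbinom_lt _ _ this, mul_zero]
  · intro h; exact absurd (Finset.mem_range.mpr (Nat.succ_pos m)) h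
end
end

section
/- For m ≥ 1, α_{m,2m-1} = {4m}/{1}, i.e., α_{m,2m-1} equals the quantum integer (q^{2m} - q^{-2m})/(q^{1/2} - q^{-1/2}). -/
open Finset LaurentPolynomial

noncomputable section

lemma qbinom_zero (i : ℕ) : ∀ n, i < n → qbinom i n = 0 := by
  induction i with
  | zero => intro n h; cases n with
    | zero => omega
    | succ n => rfl
  | succ i ih => intro n h; cases n with
    | zero => omega
    | succ n => simp [qbinom, ih n (by omega), ih (n+1) (by omega)]

lemma qbinom_self_s3 (n : ℕ) : qbinom n n = 1 := by
  induction n with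
  | zero => rfl
  | succ n ih => simp [qbinom, ih, qbinom_zero n (n+1) (by omega)]

lemma qbinom_succ_mul (i : ℕ) : qbinom (i+1) i * qint 1 = qint (i+1) := by
  induction i with
  | zero => simp [qbinom, qint]
  | succ i ih =>
    have : qbinom (i+1+1) (i+1) = T (-1) * qbinom (i+1) i + T ((i:ℤ)+1) * 1 := by
      rw [qbinom, qbinom_self_s3]
      push_cast
      ring_nf
    rw [this, add_mul, mul_assoc, ih]
    simp only [qint, mul_sub, sub_mul, mul_one, ← T_add]
    push_cast
    ring_nf

/-- `α_{m,2m-1} = {4m}/{1}`, stated denominator-free as `α_{m,2m-1} · {1} = {4m}`. -/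
theorem stmt_3 (m : ℕ) (hm : 1 ≤ m) :
    qalpha m (2 * m - 1) * qint 1 = qint (4 * m) := by
  obtain ⟨m, rfl⟩ : ∃ m', m = m' + 1 := ⟨m - 1, by omega⟩
  rw [qalpha, Finset.sum_eq_single_of_mem 0 (by simp)]
  · simp only [pow_zero, one_mul, Nat.mul_zero, Nat.sub_zero]
    rw [show qbinom (2*(m+1)+1) 0 = 1 from rfl, one_mul]
    rw [show 2*(m+1) + (2*(m+1)-1) + 1 = (2*(2*(m+1)-1)+1) + 1 from by omega,
      qbinom_succ_mul,
      show 2*(2*(m+1)-1)+1 = 4*m+3 from by omega]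
    congr 1
  · intro k hk hk0
    rw [Finset.mem_range] at hk
    rw [qbinom_zero (2*(m+1) + (2*(m+1)-1) + 1 - 2*k) (2*(2*(m+1)-1)+1) (by omega),
      mul_zero]
end
end

section
/- For m, n ≥ 0, if n > 2m or n < m/2 then α_{m,n} = 0 (vanishing of α outside the range n/2 ≤ m ≤ 2n). -/
open Finset LaurentPolynomial

/-!
For `n > 2m` every summand of `α_{m,n}` vanishes, since `2m+n+1-2k < 2n+1`.

For `m > 2n`, multiply by `{2n+1}!`: the `k`-th summand becomes
`(-1)^k [2m+1 choose k] {2m+n+1-2k}_{2n+1}`, which is invariant under `k ↦ 2m+1-k`,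
so `2 {2n+1}! α_{m,n}` is the full alternating sum over `0 ≤ k ≤ 2m+1`.
As a function of `k`, `{c-2k}_r` is a combination, with coefficients independent of `k`,
of the monomials `q^{kb/2}` with `b` even and `|b| ≤ 2r`. So the full sum is a combination of
the sums `Σ_k (-1)^k [N choose k] q^{kb/2}` with `N = 2m+1 > 4n+2 ≥ |b|`. By the `q`-binomial
theorem such a sum is `∏_{j<N} (1 - q^{(b+N-1-2j)/2})`, and one of its factors is `0`.
-/

namespace QAlpha

instance : CharZero R := (RingHom.charZero_iff Polynomial.toLaurent_injective).mp inferInstance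

lemma T_injective {S : Type*} [Semiring S] [Nontrivial S] :
    Function.Injective (T : ℤ → S[T;T⁻¹]) := fun i j h => by
  simpa using congrArg degree h

lemma T_mul_T_of_add_eq {S : Type*} [Semiring S] {a b c d : ℤ} (h : a + b = c + d) :
    (T a * T b : S[T;T⁻¹]) = T c * T d := by
  rw [← T_add, ← T_add, h]

lemma qint_zero : qint 0 = 0 := by simp [qint]

lemma qint_neg (i : ℤ) : qint (-i) = -qint i := by simp [qint]

lemma qint_ne_zero {i : ℤ} (h : i ≠ 0) : qint i ≠ 0 := by
  rw [qint, sub_ne_zero, Ne, T_injective.eq_iff]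
  omega

lemma qint_add_one_eq (i n : ℤ) :
    qint (i + 1) = T (n - i) * qint (n + 1) + T (n + 1) * qint (i - n) := by
  simp only [qint, mul_sub, ← T_add]
  ring_nf

lemma qfall_succ (i : ℤ) (n : ℕ) : qfall i (n + 1) = qfall i n * qint (i - n) :=
  prod_range_succ _ _

lemma qfall_add_one_succ (i : ℤ) (n : ℕ) :
    qfall (i + 1) (n + 1) = qint (i + 1) * qfall i n := by
  rw [qfall, prod_range_succ', mul_comm, qfall]
  congr 1
  · simp
  · exact prod_congr rfl fun k _ => by push_cast; ring_nf

lemma qfall_add (i : ℤ) (a b : ℕ) : qfall i (a + b) = qfall i a * qfall (i - a) b := by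
  rw [qfall, prod_range_add, qfall, qfall]
  exact congrArg _ (prod_congr rfl fun k _ => by push_cast; ring_nf)

lemma qfall_natCast_eq_zero_of_lt {i n : ℕ} (h : i < n) : qfall i n = 0 :=
  prod_eq_zero (mem_range.mpr h) (by simp [qint_zero])

lemma qfall_reflect (j : ℤ) (n : ℕ) : qfall (n - 1 - j) n = (-1) ^ n * qfall j n := by
  have hsign : (-1 : R) ^ n = ∏ _k ∈ range n, (-1 : R) := by simp
  rw [qfall, qfall, ← prod_range_reflect (fun k => qint (j - k)), hsign, ← prod_mul_distrib]
  refine prod_congr rfl fun k hk => ?_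
  have hk : k < n := mem_range.mp hk
  rw [Nat.cast_sub (by omega), Nat.cast_sub (by omega), neg_one_mul, ← qint_neg]
  push_cast
  ring_nf

lemma qfact_succ (n : ℕ) : qfact (n + 1) = qint (n + 1) * qfact n := by
  rw [qfact, qfact, Nat.cast_succ, qfall_add_one_succ]

lemma qfact_ne_zero (n : ℕ) : qfact n ≠ 0 := by
  induction n with
  | zero => simp [qfact, qfall]
  | succ n ih =>
    rw [qfact_succ]
    exact mul_ne_zero (qint_ne_zero (by positivity)) ih

lemma qbinom_succ_succ (i n : ℕ) :
    qbinom (i + 1) (n + 1)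
      = T (-((i : ℤ) - n)) * qbinom i n + T ((n : ℤ) + 1) * qbinom i (n + 1) :=
  rfl

lemma qfact_mul_qbinom (i n : ℕ) : qfact n * qbinom i n = qfall i n := by
  induction i generalizing n with
  | zero =>
    cases n with
    | zero => simp [qbinom, qfact, qfall]
    | succ n => simpa [qbinom] using (qfall_natCast_eq_zero_of_lt (Nat.succ_pos n)).symm
  | succ i ih =>
    cases n with
    | zero => simp [qbinom, qfact, qfall]
    | succ n =>
      calc qfact (n + 1) * qbinom (i + 1) (n + 1)
          = T (-((i : ℤ) - n)) * qint ((n : ℤ) + 1) * (qfact n * qbinom i n)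
            + T ((n : ℤ) + 1) * (qfact (n + 1) * qbinom i (n + 1)) := by
            rw [qbinom_succ_succ, qfact_succ]; ring
        _ = qfall i n * qint ((i : ℤ) + 1) := by
            rw [ih, ih, qfall_succ, qint_add_one_eq i n]; ring_nf
        _ = qfall ((i + 1 : ℕ) : ℤ) (n + 1) := by
            rw [Nat.cast_succ, qfall_add_one_succ, mul_comm]

lemma qbinom_eq_zero_of_lt {i n : ℕ} (h : i < n) : qbinom i n = 0 := by
  have := qfact_mul_qbinom i n
  rw [qfall_natCast_eq_zero_of_lt h] at this
  exact (mul_eq_zero.mp this).resolve_left (qfact_ne_zero n)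

lemma qfact_mul_qfact_mul_qbinom {N k : ℕ} (h : k ≤ N) :
    qfact k * qfact (N - k) * qbinom N k = qfact N := by
  rw [mul_right_comm, qfact_mul_qbinom, qfact, qfact, Nat.cast_sub h, ← qfall_add,
    Nat.add_sub_cancel' h]

lemma qbinom_symm {N k : ℕ} (h : k ≤ N) : qbinom N (N - k) = qbinom N k := by
  refine mul_left_cancel₀ (mul_ne_zero (qfact_ne_zero k) (qfact_ne_zero (N - k))) ?_
  rw [qfact_mul_qfact_mul_qbinom h, mul_comm (qfact k),
    ← qfact_mul_qfact_mul_qbinom (Nat.sub_le N k), Nat.sub_sub_self h]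

noncomputable def qaltSum (N : ℕ) (b : ℤ) : R :=
  ∑ k ∈ range (N + 1), (-1 : R) ^ k * qbinom N k * T (k * b)

lemma qaltSum_succ (N : ℕ) (b : ℤ) :
    qaltSum (N + 1) b = (1 - T (b - N)) * qaltSum N (b + 1) := by
  have hterm (k : ℕ) : (-1 : R) ^ (k + 1) * qbinom (N + 1) (k + 1) * T ((k + 1 : ℕ) * b)
      = -T (b - N) * ((-1 : R) ^ k * qbinom N k * T (k * (b + 1)))
        + (-1 : R) ^ (k + 1) * qbinom N (k + 1) * T ((k + 1 : ℕ) * (b + 1)) := by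
    rw [qbinom_succ_succ]
    push_cast
    have hT₁ : (T (-((N : ℤ) - k)) * T ((k + 1) * b) : R) = T (b - N) * T (k * (b + 1)) :=
      T_mul_T_of_add_eq (by ring)
    have hT₂ : (T ((k : ℤ) + 1) * T ((k + 1) * b) : R) = T ((k + 1) * (b + 1)) := by
      rw [← T_add]; ring_nf
    linear_combination (-1 : R) ^ (k + 1) * (qbinom N k * hT₁ + qbinom N (k + 1) * hT₂)
  have hshift : ∑ k ∈ range (N + 1),
      (-1 : R) ^ (k + 1) * qbinom N (k + 1) * T ((k + 1 : ℕ) * (b + 1))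
        = qaltSum N (b + 1) - 1 := by
    rw [sum_range_succ, qbinom_eq_zero_of_lt (Nat.lt_succ_self N), qaltSum, sum_range_succ' _ N]
    simp [qbinom]
  calc qaltSum (N + 1) b
      = ∑ k ∈ range (N + 1), (-1 : R) ^ (k + 1) * qbinom (N + 1) (k + 1) * T ((k + 1 : ℕ) * b)
        + 1 := by
        rw [qaltSum, sum_range_succ']
        simp [qbinom]
    _ = -T (b - N) * qaltSum N (b + 1) + (qaltSum N (b + 1) - 1) + 1 := by
        rw [sum_congr rfl fun k _ => hterm k, sum_add_distrib, ← mul_sum, hshift, qaltSum]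
    _ = (1 - T (b - N)) * qaltSum N (b + 1) := by ring

/-- A `q`-binomial theorem. -/
lemma qaltSum_eq_prod (N : ℕ) (b : ℤ) :
    qaltSum N b = ∏ j ∈ range N, (1 - T (b + N - 1 - 2 * j)) := by
  induction N generalizing b with
  | zero => simp [qaltSum, qbinom]
  | succ N ih =>
    rw [qaltSum_succ, ih, prod_range_succ, mul_comm]
    congr 1
    · exact prod_congr rfl fun j _ => by push_cast; ring_nf
    · push_cast; ring_nf

lemma qaltSum_eq_zero {N : ℕ} {b : ℤ} (hb : Even (b + N + 1)) (hbN : |b| < N) :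
    qaltSum N b = 0 := by
  obtain ⟨a, ha⟩ := hb
  obtain ⟨hlo, hhi⟩ := abs_lt.mp hbN
  rw [qaltSum_eq_prod]
  refine prod_eq_zero (i := (a - 1).toNat) (mem_range.mpr (by omega)) ?_
  rw [Int.toNat_of_nonneg (by omega), show b + N - 1 - 2 * (a - 1) = 0 by omega, T_zero,
    sub_self]

theorem sum_qbinom_mul_T_mul_qfall_eq_zero (N r : ℕ) (c : ℤ) {b : ℤ} (hb : Even (b + N + 1))
    (hbr : |b| + 2 * r < N) :
    ∑ k ∈ range (N + 1), (-1 : R) ^ k * qbinom N k * T (k * b) * qfall (c - 2 * k) r = 0 := by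
  induction r generalizing b with
  | zero => simpa [qfall, qaltSum] using qaltSum_eq_zero hb (by omega)
  | succ r ih =>
    have hterm (k : ℕ) : (-1 : R) ^ k * qbinom N k * T (k * b) * qfall (c - 2 * k) (r + 1)
        = T (c - r) * ((-1 : R) ^ k * qbinom N k * T (k * (b - 2)) * qfall (c - 2 * k) r)
          - T (r - c) * ((-1 : R) ^ k * qbinom N k * T (k * (b + 2)) * qfall (c - 2 * k) r) := by
      rw [qfall_succ, qint]
      have hT₁ : (T (k * b) * T (c - 2 * k - r) : R) = T (c - r) * T (k * (b - 2)) :=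
        T_mul_T_of_add_eq (by ring)
      have hT₂ : (T (k * b) * T (-(c - 2 * k - r)) : R) = T (r - c) * T (k * (b + 2)) :=
        T_mul_T_of_add_eq (by ring)
      linear_combination (-1 : R) ^ k * qbinom N k * qfall (c - 2 * k) r * (hT₁ - hT₂)
    obtain ⟨a, ha⟩ := hb
    obtain ⟨hlo, hhi⟩ := abs_lt.mp (lt_sub_iff_add_lt.mpr hbr)
    have hdown := ih (b := b - 2) ⟨a - 1, by omega⟩
      (by rw [← lt_sub_iff_add_lt, abs_lt]; omega)
    have hup := ih (b := b + 2) ⟨a + 1, by omega⟩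
      (by rw [← lt_sub_iff_add_lt, abs_lt]; omega)
    rw [sum_congr rfl fun k _ => hterm k, sum_sub_distrib, ← mul_sum, ← mul_sum, hdown, hup,
      mul_zero, mul_zero, sub_zero]

theorem sum_range_two_mul_add_two_eq_two_nsmul {M : Type*} [AddCommMonoid M] (f : ℕ → M)
    (m : ℕ) (hf : ∀ k ≤ m, f (2 * m + 1 - k) = f k) :
    ∑ k ∈ range (2 * m + 2), f k = 2 • ∑ k ∈ range (m + 1), f k := by
  rw [show 2 * m + 2 = (m + 1) + (m + 1) by ring, sum_range_add, two_nsmul,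
    ← sum_range_reflect (fun k => f (m + 1 + k))]
  congr 1
  refine sum_congr rfl fun k hk => ?_
  have hk : k < m + 1 := mem_range.mp hk
  rw [show m + 1 + (m + 1 - 1 - k) = 2 * m + 1 - k by omega, hf k (by omega)]

lemma qfact_mul_qalpha (m n : ℕ) :
    qfact (2 * n + 1) * qalpha m n = ∑ k ∈ range (m + 1),
      (-1 : R) ^ k * qbinom (2 * m + 1) k * qfall ((2 * m + n + 1 : ℤ) - 2 * k) (2 * n + 1) := by
  rw [qalpha, mul_sum]
  refine sum_congr rfl fun k hk => ?_
  have hk : k < m + 1 := mem_range.mp hk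
  rw [mul_left_comm, qfact_mul_qbinom, Nat.cast_sub (by omega)]
  push_cast
  rfl

lemma qalpha_summand_reflect {m n k : ℕ} (hk : k ≤ 2 * m + 1) :
    (-1 : R) ^ (2 * m + 1 - k) * qbinom (2 * m + 1) (2 * m + 1 - k)
        * qfall ((2 * m + n + 1 : ℤ) - 2 * (2 * m + 1 - k : ℕ)) (2 * n + 1)
      = (-1 : R) ^ k * qbinom (2 * m + 1) k
        * qfall ((2 * m + n + 1 : ℤ) - 2 * k) (2 * n + 1) := by
  have hodd : (-1 : R) ^ (2 * m + 1 - k) * (-1) ^ k = -1 := by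
    rw [← pow_add, Nat.sub_add_cancel hk, Odd.neg_one_pow ⟨m, rfl⟩]
  have hsq : ((-1 : R) ^ k) ^ 2 = 1 := by rw [← pow_mul, Even.neg_one_pow ⟨k, by ring⟩]
  have hsign : (-1 : R) ^ (2 * m + 1 - k) = -(-1) ^ k := by
    linear_combination (-1 : R) ^ k * hodd - (-1 : R) ^ (2 * m + 1 - k) * hsq
  have hfall := qfall_reflect ((2 * m + n + 1 : ℤ) - 2 * k) (2 * n + 1)
  rw [Odd.neg_one_pow ⟨n, rfl⟩] at hfall
  have hreflect : (2 * m + n + 1 : ℤ) - 2 * (2 * m + 1 - k : ℕ)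
      = ((2 * n + 1 : ℕ) : ℤ) - 1 - ((2 * m + n + 1 : ℤ) - 2 * k) := by
    push_cast [Nat.cast_sub hk]; ring
  rw [hsign, qbinom_symm hk, hreflect, hfall]
  ring

theorem qalpha_eq_zero_of_two_mul_m_lt_n {m n : ℕ} (h : 2 * m < n) : qalpha m n = 0 :=
  sum_eq_zero fun k hk => by
    have hk : k < m + 1 := mem_range.mp hk
    rw [qbinom_eq_zero_of_lt (i := 2 * m + n + 1 - 2 * k) (n := 2 * n + 1) (by omega),
      mul_zero]

theorem qalpha_eq_zero_of_two_mul_n_lt_m {m n : ℕ} (h : 2 * n < m) : qalpha m n = 0 := by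
  have hfull := sum_qbinom_mul_T_mul_qfall_eq_zero (2 * m + 1) (2 * n + 1) (2 * m + n + 1)
    (b := 0) ⟨m + 1, by push_cast; ring⟩ (by rw [abs_zero]; omega)
  simp only [mul_zero, T_zero, mul_one] at hfull
  rw [sum_range_two_mul_add_two_eq_two_nsmul _ m fun k hk => qalpha_summand_reflect (by omega),
    ← qfact_mul_qalpha, nsmul_eq_mul] at hfull
  simpa [two_ne_zero, qfact_ne_zero] using hfull

end QAlpha

open QAlpha in
/-- `α_{m,n} = 0` unless `n/2 ≤ m ≤ 2n`, i.e. it vanishes when `n > 2m` or `m > 2n`. -/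
theorem stmt_4 (m n : ℕ) (h : 2 * m < n ∨ 2 * n < m) : qalpha m n = 0 :=
  h.elim qalpha_eq_zero_of_two_mul_m_lt_n qalpha_eq_zero_of_two_mul_n_lt_m
end

section
/- For 0 ≤ j ≤ m, the evaluation of α_{m,2m-j} at q^{1/2} = 1 equals 4^j · (m choose j). In classical terms: Σ_{k=0}^{⌊j/2⌋} (-1)^k C(2m+1, k) C(4m-j-2k+1, 4m-2j+1) = 4^j C(m, j), where C denotes ordinary binomial coefficients. -/
/-!
The sum is the coefficient of `X ^ j` in `(1 - X²) ^ (2m+1) / (1 - X) ^ (4m+2-2j)`. Splitting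
`1 - X² = (1 + X)(1 - X)` and expanding `(1 + X) ^ (2m) = ((1 - X)² + 4X) ^ m` writes this
series as `∑ᵢ 4 ^ i C(m,i) X ^ i (1 + X) (1 - X) ^ (2(j-i)-1)`. For `i < j` the polynomial
`(1 + X) (1 - X) ^ (2n-1)`, `n = j - i`, has vanishing middle coefficient at `X ^ n`, because
`C(2n-1, n) = C(2n-1, n-1)`; for `i > j` the factor `X ^ i` is too large; only `i = j`
contributes, with `(1 + X) / (1 - X)` of constant term `1`.
-/

open Finset

namespace PowerSeries

variable {R : Type*} [CommRing R]

theorem coeff_one_sub_X_pow (N n : ℕ) :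
    coeff n ((1 - X : R⟦X⟧) ^ N) = (-1) ^ n * N.choose n := by
  have h : (1 - X : R⟦X⟧) ^ N =
      rescale (-1) (((Polynomial.X + 1 : Polynomial R) ^ N : Polynomial R) : R⟦X⟧) := by
    simp [rescale_X, sub_eq_add_neg, add_comm]
  rw [h, coeff_rescale, Polynomial.coeff_coe, Polynomial.coeff_X_add_one_pow]

theorem coeff_succ_one_add_X_mul_one_sub_X_pow (e : ℕ) :
    coeff (e + 1) ((1 + X : R⟦X⟧) * (1 - X) ^ (2 * e + 1)) = 0 := by
  rw [add_mul, one_mul, map_add, coeff_succ_X_mul, coeff_one_sub_X_pow, coeff_one_sub_X_pow,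
    Nat.choose_symm_half, pow_succ]
  ring

theorem one_sub_X_sq_pow_eq_sum (N : ℕ) :
    (1 - X ^ 2 : R⟦X⟧) ^ N =
      ∑ k ∈ range (N + 1), C ((-1) ^ k * N.choose k : R) * X ^ (2 * k) := by
  rw [sub_eq_neg_add, add_pow]
  refine sum_congr rfl fun k _ => ?_
  rw [map_mul, map_pow, map_neg, map_one, map_natCast, one_pow, mul_one, neg_pow, pow_mul,
    mul_right_comm]

theorem coeff_one_sub_X_sq_pow_mul (N j : ℕ) (f : R⟦X⟧) :
    coeff j ((1 - X ^ 2 : R⟦X⟧) ^ N * f) =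
      ∑ k ∈ range (j / 2 + 1), (-1) ^ k * N.choose k * coeff (j - 2 * k) f := by
  have hterm : ∀ k, coeff j (C ((-1) ^ k * N.choose k : R) * X ^ (2 * k) * f) =
      if k ∈ range (j / 2 + 1) then (-1) ^ k * N.choose k * coeff (j - 2 * k) f else 0 := by
    intro k
    have : k ∈ range (j / 2 + 1) ↔ 2 * k ≤ j := by rw [mem_range]; omega
    rw [mul_assoc, coeff_C_mul, coeff_X_pow_mul']
    simp only [this, mul_ite, mul_zero]
  rw [one_sub_X_sq_pow_eq_sum, sum_mul, map_sum]
  simp only [hterm]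
  rw [sum_ite_mem, range_inter_range]
  refine sum_subset (range_subset_range.2 (min_le_right _ _)) fun k hk hk' => ?_
  rw [Nat.choose_eq_zero_of_lt (by simp_all), Nat.cast_zero, mul_zero, zero_mul]

theorem coeff_one_add_X_mul_one_sub_X_pow_mul_invOneSubPow (d n : ℕ) :
    coeff n ((1 + X) * ((1 - X) ^ (d + 2 * n) * (invOneSubPow R (d + 1)).val)) =
      if n = 0 then 1 else 0 := by
  cases n with
  | zero =>
    rw [Nat.mul_zero, Nat.add_zero, add_comm d,
      one_sub_pow_mul_invOneSubPow_val_add_eq_invOneSubPow_val,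
      invOneSubPow_val_succ_eq_mk_add_choose, if_pos rfl]
    simp
  | succ e =>
    rw [show d + 2 * (e + 1) = 2 * e + 1 + (d + 1) by ring,
      one_sub_pow_add_mul_invOneSubPow_val_eq_one_sub_pow, if_neg e.succ_ne_zero]
    exact coeff_succ_one_add_X_mul_one_sub_X_pow e

end PowerSeries

theorem one_sub_sq_pow_two_mul_add_one {A : Type*} [CommRing A] (x : A) (m : ℕ) :
    (1 - x ^ 2) ^ (2 * m + 1) = ∑ i ∈ range (m + 1),
      (4 ^ i * m.choose i) • (x ^ i * ((1 + x) * (1 - x) ^ (2 * (m - i) + (2 * m + 1)))) := by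
  have hsq : (1 + x) ^ 2 = 4 * x + (1 - x) ^ 2 := by ring
  rw [show 1 - x ^ 2 = (1 + x) * (1 - x) by ring, mul_pow, pow_succ, pow_mul, hsq, add_pow,
    sum_mul, sum_mul]
  refine sum_congr rfl fun i _ => ?_
  rw [nsmul_eq_mul, pow_add, ← pow_mul]
  push_cast
  ring

open PowerSeries in
/-- Classical specialization: for `0 ≤ j ≤ m`,
`Σ_{k=0}^{⌊j/2⌋} (-1)^k C(2m+1,k) C(4m-j-2k+1, 4m-2j+1) = 4^j C(m,j)`. -/
theorem stmt_5 (m j : ℕ) (h : j ≤ m) :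
    ∑ k ∈ Finset.range (j / 2 + 1),
      (-1 : ℤ) ^ k * (Nat.choose (2 * m + 1) k) *
        (Nat.choose (4 * m + 1 - j - 2 * k) (4 * m + 1 - 2 * j))
      = 4 ^ j * Nat.choose m j := by
  set d := 4 * m + 1 - 2 * j
  set U := (invOneSubPow ℤ (d + 1)).val with hU
  have hterm : ∀ i ∈ range (m + 1),
      coeff j (X ^ i * ((1 + X) * ((1 - X) ^ (2 * (m - i) + (2 * m + 1)) * U))) =
        if i = j then 1 else 0 := by
    intro i hi
    by_cases hij : i ≤ j
    · rw [coeff_X_pow_mul', if_pos hij, show 2 * (m - i) + (2 * m + 1) = d + 2 * (j - i) by omega,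
        coeff_one_add_X_mul_one_sub_X_pow_mul_invOneSubPow]
      exact if_congr (by omega) rfl rfl
    · rw [coeff_X_pow_mul', if_neg hij, if_neg (by omega)]
  calc _ = ∑ k ∈ range (j / 2 + 1), (-1) ^ k * (2 * m + 1).choose k * coeff (j - 2 * k) U := by
        refine sum_congr rfl fun k hk => ?_
        rw [hU, invOneSubPow_val_succ_eq_mk_add_choose, coeff_mk,
          show 4 * m + 1 - j - 2 * k = d + (j - 2 * k) by have := mem_range.1 hk; omega]
    _ = coeff j ((1 - X ^ 2) ^ (2 * m + 1) * U) := (coeff_one_sub_X_sq_pow_mul _ _ _).symm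
    _ = _ := by
        simp only [one_sub_sq_pow_two_mul_add_one, sum_mul, smul_mul_assoc, mul_assoc, map_sum,
          map_nsmul]
        rw [sum_congr rfl fun i hi => congrArg _ (hterm i hi)]
        simp [Nat.lt_succ_of_le h]
end

section
/- For 0 ≤ j ≤ m, the sums α̃(m,j) = Σ_{k=0}^{⌊j/2⌋} (-1)^k C(2m+1,k) C(4m-j-2k+1, 4m-2j+1) satisfy the recurrence j·α̃(m,j) = 4(m-j+1)·α̃(m,j-1) for 1 ≤ j ≤ m. -/
open Finset

private def Gc (m j : ℕ) (k : ℕ) : ℤ :=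
  -2 * k * (4 * (m : ℤ) + 3 - j - 2 * k) * (4 * (m : ℤ) + 2 - j - 2 * k) *
    ((-1 : ℤ) ^ k * (Nat.choose (2 * m + 1) k) *
      (Nat.choose (4 * m + 1 - j - 2 * k) (4 * m + 1 - 2 * j)))

private lemma cert (m j k : ℕ) (hj : 1 ≤ j) (hjm : j ≤ m) (hk : 2 * k ≤ j) :
    (4 * (m : ℤ) + 2 - 2 * j) * (4 * (m : ℤ) + 3 - 2 * j) *
      ((j : ℤ) * ((-1 : ℤ) ^ k * (Nat.choose (2 * m + 1) k) *
          (Nat.choose (4 * m + 1 - j - 2 * k) (4 * m + 1 - 2 * j)))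
        - 4 * ((m : ℤ) - j + 1) * ((-1 : ℤ) ^ k * (Nat.choose (2 * m + 1) k) *
          (Nat.choose (4 * m + 1 - (j - 1) - 2 * k) (4 * m + 1 - 2 * (j - 1)))))
    = Gc m j (k + 1) - Gc m j k := by
  unfold Gc
  rw [show 4 * m + 1 - (j - 1) - 2 * k = (4 * m + 1 - j - 2 * k) + 1 from by omega,
      show 4 * m + 1 - 2 * (j - 1) = (4 * m + 1 - 2 * j) + 2 from by omega,
      show 4 * m + 1 - j - 2 * (k + 1) = 4 * m - 1 - j - 2 * k from by omega]
  set N := 4 * m + 1 - j - 2 * k with hNdef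
  set A := 4 * m + 1 - 2 * j with hAdef
  set N2 := 4 * m - 1 - j - 2 * k with hN2def
  have cA : (A : ℤ) = 4 * (m : ℤ) + 1 - 2 * j := by omega
  have cN : (N : ℤ) = 4 * (m : ℤ) + 1 - j - 2 * k := by omega
  have cN2 : (N2 : ℤ) = 4 * (m : ℤ) - 1 - j - 2 * k := by omega
  -- relation for b2 = C(N+1, A+2)
  have hb2N : Nat.choose (N + 1) (A + 2) * ((A + 1) * (A + 2))
      = Nat.choose N A * ((N + 1) * (N - A)) := by
    have h1 := Nat.choose_succ_right_eq (N + 1) (A + 1)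
    have h2 := Nat.choose_succ_right_eq (N + 1) A
    have h3 := Nat.choose_mul_succ_eq N A
    have hs1 : N + 1 - (A + 1) = N - A := by omega
    calc Nat.choose (N + 1) (A + 2) * ((A + 1) * (A + 2))
        = (Nat.choose (N + 1) (A + 2) * (A + 2)) * (A + 1) := by ring
      _ = (Nat.choose (N + 1) (A + 1) * (N + 1 - (A + 1))) * (A + 1) := by rw [h1]
      _ = (Nat.choose (N + 1) (A + 1) * (A + 1)) * (N + 1 - (A + 1)) := by ring
      _ = (Nat.choose (N + 1) A * (N + 1 - A)) * (N + 1 - (A + 1)) := by rw [h2]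
      _ = (Nat.choose N A * (N + 1)) * (N + 1 - (A + 1)) := by rw [← h3]
      _ = Nat.choose N A * ((N + 1) * (N - A)) := by rw [hs1]; ring
  have hANle : A ≤ N := by omega
  zify [hANle] at hb2N
  rw [cA, cN] at hb2N
  have hb2 : (Nat.choose (N + 1) (A + 2) : ℤ) *
        ((4 * (m : ℤ) + 2 - 2 * j) * (4 * (m : ℤ) + 3 - 2 * j))
      = (Nat.choose N A : ℤ) * (((j : ℤ) - 2 * k) * (4 * (m : ℤ) + 2 - j - 2 * k)) := by
    linear_combination hb2N
  -- relation for b3 = C(N2, A)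
  have hb3 : (Nat.choose N2 A : ℤ) *
        ((4 * (m : ℤ) + 1 - j - 2 * k) * (4 * (m : ℤ) - j - 2 * k))
      = (Nat.choose N A : ℤ) * (((j : ℤ) - 2 * k) * ((j : ℤ) - 2 * k - 1)) := by
    rcases le_or_gt (2 * k + 2) j with h | h
    · have h3a := Nat.choose_mul_succ_eq N2 A
      have h3b := Nat.choose_mul_succ_eq (N2 + 1) A
      have nat3 : Nat.choose N2 A * ((N2 + 1) * (N2 + 2))
          = Nat.choose (N2 + 2) A * ((N2 + 2 - A) * (N2 + 1 - A)) := by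
        calc Nat.choose N2 A * ((N2 + 1) * (N2 + 2))
            = (Nat.choose N2 A * (N2 + 1)) * (N2 + 2) := by ring
          _ = (Nat.choose (N2 + 1) A * (N2 + 1 - A)) * (N2 + 2) := by rw [h3a]
          _ = (Nat.choose (N2 + 1) A * ((N2 + 1) + 1)) * (N2 + 1 - A) := by ring
          _ = (Nat.choose ((N2 + 1) + 1) A * ((N2 + 1) + 1 - A)) * (N2 + 1 - A) := by rw [h3b]
          _ = Nat.choose (N2 + 2) A * ((N2 + 2 - A) * (N2 + 1 - A)) := by ring
      rw [show N2 + 2 = N from by omega] at nat3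
      have hle1 : A ≤ N := by omega
      have hle2 : A ≤ N2 + 1 := by omega
      zify [hle1, hle2] at nat3
      rw [cA, cN, cN2] at nat3
      linear_combination nat3
    · rw [Nat.choose_eq_zero_of_lt (show N2 < A from by omega)]
      have h0 : ((j : ℤ) - 2 * k) = 0 ∨ ((j : ℤ) - 2 * k - 1) = 0 := by omega
      rcases h0 with h0 | h0 <;> rw [h0] <;> push_cast <;> ring
  -- relation for c2 = C(2m+1, k+1)
  have hcN := Nat.choose_succ_right_eq (2 * m + 1) k
  have hkle : k ≤ 2 * m + 1 := by omega
  zify [hkle] at hcN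
  have hcb : ((Nat.choose (2 * m + 1) (k + 1) : ℤ) * ((k : ℤ) + 1)) *
        ((Nat.choose N2 A : ℤ) *
          ((4 * (m : ℤ) + 1 - j - 2 * k) * (4 * (m : ℤ) - j - 2 * k)))
      = ((Nat.choose (2 * m + 1) k : ℤ) * (2 * (m : ℤ) + 1 - k)) *
        ((Nat.choose N A : ℤ) * (((j : ℤ) - 2 * k) * ((j : ℤ) - 2 * k - 1))) := by
    rw [hcN, hb3]
  push_cast
  linear_combination
    (-4 * ((m : ℤ) - (j : ℤ) + 1) * (-1 : ℤ) ^ k * (Nat.choose (2 * m + 1) k : ℤ)) * hb2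
    - 2 * (-1 : ℤ) ^ k * hcb

/-- The sums `α̃(m,j) = Σ_{k=0}^{⌊j/2⌋} (-1)^k C(2m+1,k) C(4m-j-2k+1, 4m-2j+1)`
satisfy `j·α̃(m,j) = 4(m-j+1)·α̃(m,j-1)` for `1 ≤ j ≤ m`. -/
theorem stmt_6 (m j : ℕ) (hj : 1 ≤ j) (hjm : j ≤ m) :
    (j : ℤ) * ∑ k ∈ Finset.range (j / 2 + 1),
      (-1 : ℤ) ^ k * (Nat.choose (2 * m + 1) k) *
        (Nat.choose (4 * m + 1 - j - 2 * k) (4 * m + 1 - 2 * j))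
    = 4 * ((m : ℤ) - j + 1) * ∑ k ∈ Finset.range ((j - 1) / 2 + 1),
      (-1 : ℤ) ^ k * (Nat.choose (2 * m + 1) k) *
        (Nat.choose (4 * m + 1 - (j - 1) - 2 * k) (4 * m + 1 - 2 * (j - 1))) := by
  have hext : (∑ k ∈ Finset.range ((j - 1) / 2 + 1),
        (-1 : ℤ) ^ k * (Nat.choose (2 * m + 1) k) *
          (Nat.choose (4 * m + 1 - (j - 1) - 2 * k) (4 * m + 1 - 2 * (j - 1))))
      = ∑ k ∈ Finset.range (j / 2 + 1),
        (-1 : ℤ) ^ k * (Nat.choose (2 * m + 1) k) *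
          (Nat.choose (4 * m + 1 - (j - 1) - 2 * k) (4 * m + 1 - 2 * (j - 1))) := by
    apply Finset.sum_subset
    · apply Finset.range_subset_range.mpr; omega
    · intro x hx hnx
      simp only [Finset.mem_range] at hx hnx
      rw [show Nat.choose (4 * m + 1 - (j - 1) - 2 * x) (4 * m + 1 - 2 * (j - 1)) = 0
        from Nat.choose_eq_zero_of_lt (by omega)]
      push_cast; ring
  rw [hext]
  have key : ∑ k ∈ Finset.range (j / 2 + 1),
      ((4 * (m : ℤ) + 2 - 2 * j) * (4 * (m : ℤ) + 3 - 2 * j) *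
        ((j : ℤ) * ((-1 : ℤ) ^ k * (Nat.choose (2 * m + 1) k) *
            (Nat.choose (4 * m + 1 - j - 2 * k) (4 * m + 1 - 2 * j)))
          - 4 * ((m : ℤ) - j + 1) * ((-1 : ℤ) ^ k * (Nat.choose (2 * m + 1) k) *
            (Nat.choose (4 * m + 1 - (j - 1) - 2 * k) (4 * m + 1 - 2 * (j - 1)))))) = 0 := by
    rw [Finset.sum_congr rfl
      (fun k hk => cert m j k hj hjm (by simp only [Finset.mem_range] at hk; omega))]
    rw [Finset.sum_range_sub (Gc m j)]
    have g0 : Gc m j 0 = 0 := by simp [Gc]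
    have g1 : Gc m j (j / 2 + 1) = 0 := by
      unfold Gc
      rw [show Nat.choose (4 * m + 1 - j - 2 * (j / 2 + 1)) (4 * m + 1 - 2 * j) = 0
        from Nat.choose_eq_zero_of_lt (by omega)]
      push_cast; ring
    rw [g0, g1, sub_zero]
  rw [← Finset.mul_sum] at key
  have hD : (4 * (m : ℤ) + 2 - 2 * j) * (4 * (m : ℤ) + 3 - 2 * j) ≠ 0 :=
    mul_ne_zero (by omega) (by omega)
  have h := (mul_eq_zero.mp key).resolve_left hD
  rw [Finset.sum_sub_distrib, ← Finset.mul_sum, ← Finset.mul_sum] at h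
  linarith [h]
end

section
/- The Zeilberger certificate identity: for 0 ≤ j ≤ m and 1 ≤ k ≤ ⌊j/2⌋, with F̃(m,j,k) = (-1)^k C(2m+1,k) C(4m-j-2k+1, 4m-2j+1) and G(m,j,k) = -[2k(2k-4m+j-3)(2k-4m+j-2)/((4m-2j+2)(4m-2j+3))]·F̃(m,j,k), one has j·F̃(m,j,k) - 4(m-j+1)·F̃(m,j-1,k) = G(m,j,k+1) - G(m,j,k) (with G(m,j,0) = 0 and G(m,j,⌊j/2⌋+1) = 0). -/
open Finset

/-- `F̃(m,j,k) = (-1)^k C(2m+1,k) C(4m-j-2k+1, 4m-2j+1)` as a rational number. -/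
def Ftil (m j k : ℕ) : ℚ :=
  (-1 : ℚ) ^ k * (Nat.choose (2 * m + 1) k) *
    (Nat.choose (4 * m + 1 - j - 2 * k) (4 * m + 1 - 2 * j))

/-- The Zeilberger certificate `G(m,j,k)`, with
`G(m,j,0) = G(m,j,⌊j/2⌋+1) = 0`. -/
def Gcert (m j k : ℕ) : ℚ :=
  if k = 0 ∨ k = j / 2 + 1 then 0
  else -(2 * (k : ℚ) * (2 * k - 4 * m + j - 3) * (2 * k - 4 * m + j - 2) /
      ((4 * (m : ℚ) - 2 * j + 2) * (4 * (m : ℚ) - 2 * j + 3))) * Ftil m j k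

lemma hch1' (n s s' t : ℕ) (hs : s' = s + 1) (h : n = s + t) :
    ((n.choose s' : ℕ) : ℚ) * (s' : ℚ) = (n.choose s : ℚ) * (t : ℚ) := by
  subst hs
  have h2 := Nat.choose_succ_right_eq n s
  rw [h, Nat.add_sub_cancel_left] at h2
  rw [h]
  exact_mod_cast h2

lemma hch2' (n n' s t : ℕ) (hn : n' = n + 1) (h : n' = s + t) :
    ((n.choose s : ℕ) : ℚ) * (n' : ℚ) = ((n'.choose s : ℕ) : ℚ) * (t : ℚ) := by
  subst hn
  have h2 := Nat.choose_mul_succ_eq n s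
  have h3 : n + 1 - s = t := by omega
  rw [h3] at h2
  exact_mod_cast h2

set_option maxHeartbeats 12000000 in
/-- Zeilberger certificate identity:
`j·F̃(m,j,k) - 4(m-j+1)·F̃(m,j-1,k) = G(m,j,k+1) - G(m,j,k)`. -/
theorem stmt_7 (m j k : ℕ) (hjm : j ≤ m) (hk1 : 1 ≤ k) (hk2 : k ≤ j / 2) :
    (j : ℚ) * Ftil m j k - 4 * ((m : ℚ) - j + 1) * Ftil m (j - 1) k
      = Gcert m j (k + 1) - Gcert m j k := by
  obtain ⟨K, rfl⟩ : ∃ K, k = K + 1 := ⟨k - 1, by omega⟩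
  obtain ⟨a, rfl⟩ : ∃ a, j = 2 * K + 2 + a := ⟨j - (2 * K + 2), by omega⟩
  obtain ⟨d, rfl⟩ : ∃ d, m = 2 * K + 2 + a + d := ⟨m - (2 * K + 2 + a), by omega⟩
  simp only [Gcert]
  rw [if_neg (show ¬(K + 1 = 0 ∨ K + 1 = (2 * K + 2 + a) / 2 + 1) from by omega)]
  by_cases ha : a ≤ 1
  · -- degenerate case: a ≤ 1, G(m,j,k+1) = 0
    rw [if_pos (show K + 1 + 1 = 0 ∨ K + 1 + 1 = (2 * K + 2 + a) / 2 + 1 from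
      Or.inr (by omega))]
    obtain rfl | rfl : a = 0 ∨ a = 1 := by omega
    · simp only [Ftil]
      rw [show 4 * (2 * K + 2 + 0 + d) + 1 - (2 * K + 2 + 0) - 2 * (K + 1)
            = 4 * K + 4 * d + 5 from by omega,
          show 4 * (2 * K + 2 + 0 + d) + 1 - 2 * (2 * K + 2 + 0)
            = 4 * K + 4 * d + 5 from by omega,
          show 4 * (2 * K + 2 + 0 + d) + 1 - (2 * K + 2 + 0 - 1) - 2 * (K + 1)
            = 4 * K + 4 * d + 6 from by omega,
          show 4 * (2 * K + 2 + 0 + d) + 1 - 2 * (2 * K + 2 + 0 - 1)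
            = 4 * K + 4 * d + 7 from by omega]
      rw [Nat.choose_self, Nat.choose_eq_zero_of_lt (show 4*K+4*d+6 < 4*K+4*d+7 from by omega)]
      have hd1 : (4 * (K : ℚ) + 4 * d + 6) ≠ 0 := by positivity
      have hd2 : (4 * (K : ℚ) + 4 * d + 7) ≠ 0 := by positivity
      have hD : (42 + (K:ℚ) * 52 + (K:ℚ) * (d:ℚ) * 32 + (K:ℚ) ^ 2 * 16 + (d:ℚ) * 52 + (d:ℚ) ^ 2 * 16) ≠ 0 := by positivity
      push_cast
      ring_nf
      field_simp [hD]
      ring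
    · simp only [Ftil]
      rw [show 4 * (2 * K + 2 + 1 + d) + 1 - (2 * K + 2 + 1) - 2 * (K + 1)
            = 4 * K + 4 * d + 7 + 1 from by omega,
          show 4 * (2 * K + 2 + 1 + d) + 1 - 2 * (2 * K + 2 + 1)
            = 4 * K + 4 * d + 7 from by omega,
          show 4 * (2 * K + 2 + 1 + d) + 1 - (2 * K + 2 + 1 - 1) - 2 * (K + 1)
            = 4 * K + 4 * d + 9 from by omega,
          show 4 * (2 * K + 2 + 1 + d) + 1 - 2 * (2 * K + 2 + 1 - 1)
            = 4 * K + 4 * d + 9 from by omega]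
      rw [Nat.choose_self, Nat.choose_succ_self_right]
      have hd1 : (4 * (K : ℚ) + 4 * d + 8) ≠ 0 := by positivity
      have hd2 : (4 * (K : ℚ) + 4 * d + 9) ≠ 0 := by positivity
      have hD : (72 + (K:ℚ) * 68 + (K:ℚ) * (d:ℚ) * 32 + (K:ℚ) ^ 2 * 16 + (d:ℚ) * 68 + (d:ℚ) ^ 2 * 16) ≠ 0 := by positivity
      push_cast
      ring_nf
      field_simp [hD]
      ring
  · -- generic case: a ≥ 2
    rw [if_neg (show ¬(K + 1 + 1 = 0 ∨ K + 1 + 1 = (2 * K + 2 + a) / 2 + 1) from by omega)]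
    obtain ⟨b, rfl⟩ : ∃ b, a = b + 2 := ⟨a - 2, by omega⟩
    simp only [Ftil]
    rw [show 4 * (2 * K + 2 + (b + 2) + d) + 1 - (2 * K + 2 + (b + 2)) - 2 * (K + 1)
          = 4 * K + 3 * b + 4 * d + 11 from by omega,
        show 4 * (2 * K + 2 + (b + 2) + d) + 1 - 2 * (2 * K + 2 + (b + 2))
          = 4 * K + 2 * b + 4 * d + 9 from by omega,
        show 4 * (2 * K + 2 + (b + 2) + d) + 1 - (2 * K + 2 + (b + 2) - 1) - 2 * (K + 1)
          = 4 * K + 3 * b + 4 * d + 12 from by omega,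
        show 4 * (2 * K + 2 + (b + 2) + d) + 1 - 2 * (2 * K + 2 + (b + 2) - 1)
          = 4 * K + 2 * b + 4 * d + 11 from by omega,
        show 4 * (2 * K + 2 + (b + 2) + d) + 1 - (2 * K + 2 + (b + 2)) - 2 * (K + 1 + 1)
          = 4 * K + 3 * b + 4 * d + 9 from by omega,
        show 2 * (2 * K + 2 + (b + 2) + d) + 1 = 4 * K + 2 * b + 2 * d + 9 from by omega]
    -- ratio identities
    have E1 := hch1' (4 * K + 2 * b + 2 * d + 9) (K + 1) (K + 1 + 1)
      (3 * K + 2 * b + 2 * d + 8) (by omega) (by omega)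
    have t1 := hch1' (4 * K + 3 * b + 4 * d + 12) (4 * K + 2 * b + 4 * d + 10)
      (4 * K + 2 * b + 4 * d + 11) (b + 2) (by omega) (by omega)
    have t2 := hch1' (4 * K + 3 * b + 4 * d + 12) (4 * K + 2 * b + 4 * d + 9)
      (4 * K + 2 * b + 4 * d + 10) (b + 3) (by omega) (by omega)
    have t3 := hch2' (4 * K + 3 * b + 4 * d + 11) (4 * K + 3 * b + 4 * d + 12)
      (4 * K + 2 * b + 4 * d + 9) (b + 3) (by omega) (by omega)
    have t4 := hch2' (4 * K + 3 * b + 4 * d + 10) (4 * K + 3 * b + 4 * d + 11)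
      (4 * K + 2 * b + 4 * d + 9) (b + 2) (by omega) (by omega)
    have t5 := hch2' (4 * K + 3 * b + 4 * d + 9) (4 * K + 3 * b + 4 * d + 10)
      (4 * K + 2 * b + 4 * d + 9) (b + 1) (by omega) (by omega)
    push_cast at E1 t1 t2 t3 t4 t5
    have hK0 : (0:ℚ) ≤ (K:ℚ) := Nat.cast_nonneg K
    have hb0 : (0:ℚ) ≤ (b:ℚ) := Nat.cast_nonneg b
    have hd0 : (0:ℚ) ≤ (d:ℚ) := Nat.cast_nonneg d
    have hd1 : (4 * (K : ℚ) + 2 * b + 4 * d + 10) ≠ 0 := by intro h; linarith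
    have hd2 : (4 * (K : ℚ) + 2 * b + 4 * d + 11) ≠ 0 := by intro h; linarith
    have hd3 : (4 * (K : ℚ) + 3 * b + 4 * d + 10) ≠ 0 := by intro h; linarith
    have hd4 : (4 * (K : ℚ) + 3 * b + 4 * d + 11) ≠ 0 := by intro h; linarith
    have hd5 : ((K : ℚ) + 2) ≠ 0 := by intro h; linarith
    have hC1' : ((4 * K + 2 * b + 2 * d + 9).choose (K + 1 + 1) : ℚ)
        = ((4 * K + 2 * b + 2 * d + 9).choose (K + 1) : ℚ)
            * (3 * (K : ℚ) + 2 * b + 2 * d + 8) / ((K : ℚ) + 2) := by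
      rw [eq_div_iff hd5]
      linear_combination E1
    have hA' : ((4 * K + 3 * b + 4 * d + 12).choose (4 * K + 2 * b + 4 * d + 11) : ℚ)
        = ((4 * K + 3 * b + 4 * d + 11).choose (4 * K + 2 * b + 4 * d + 9) : ℚ)
            * (4 * (K : ℚ) + 3 * b + 4 * d + 12) * ((b : ℚ) + 2)
            / ((4 * (K : ℚ) + 2 * b + 4 * d + 10) * (4 * (K : ℚ) + 2 * b + 4 * d + 11)) := by
      rw [eq_div_iff (mul_ne_zero hd1 hd2)]
      linear_combination (4 * (K : ℚ) + 2 * b + 4 * d + 10) * t1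
        + ((b : ℚ) + 2) * t2 - ((b : ℚ) + 2) * t3
    have hA2 : ((4 * K + 3 * b + 4 * d + 9).choose (4 * K + 2 * b + 4 * d + 9) : ℚ)
        = ((4 * K + 3 * b + 4 * d + 11).choose (4 * K + 2 * b + 4 * d + 9) : ℚ)
            * ((b : ℚ) + 2) * ((b : ℚ) + 1)
            / ((4 * (K : ℚ) + 3 * b + 4 * d + 11) * (4 * (K : ℚ) + 3 * b + 4 * d + 10)) := by
      rw [eq_div_iff (mul_ne_zero hd4 hd3)]
      linear_combination (4 * (K : ℚ) + 3 * b + 4 * d + 11) * t5 + ((b : ℚ) + 1) * t4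
    rw [show (4 * ((2*K+2+(b+2)+d : ℕ) : ℚ) - 2 * ((2*K+2+(b+2) : ℕ) : ℚ) + 2)
          = 4*(K:ℚ)+2*(b:ℚ)+4*(d:ℚ)+10 from by push_cast; ring,
        show (4 * ((2*K+2+(b+2)+d : ℕ) : ℚ) - 2 * ((2*K+2+(b+2) : ℕ) : ℚ) + 3)
          = 4*(K:ℚ)+2*(b:ℚ)+4*(d:ℚ)+11 from by push_cast; ring]
    rw [hC1', hA', hA2]
    push_cast
    field_simp [hd1, hd2, hd3, hd4, hd5]
    ring
end

section
/- Equivalently formulated as a quantum binomial identity: for all m, n ≥ 0, {2n+1}! · Σ_{k=0}^{m} (-1)^k [2m+1 choose k] [2m+n-2k+1 choose 2n+1] = {2m+1}! · Σ_{k=0}^{n} (-1)^k [2n+1 choose k] [2n+m-2k+1 choose 2m+1]. -/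
/-
Multiplying `α_{m,n}` by `{2n+1}!` turns `[2m+n+1-2k choose 2n+1]` into the falling product
`{n+c}_{2n+1}` with `c = 2m+1-2k`. Since `{n-c}_{2n+1} = -{n+c}_{2n+1}`, the summands for `k` and
`2m+1-k` coincide, so twice the left-hand side is the alternating sum over all `0 ≤ k ≤ 2m+1`.
The balanced `q`-binomial theorem expands
`{n+c}_{2n+1} = -∑_r (-1)^r [2n+1 choose r] q^{(2r-2n-1)c/2}`, and the resulting double sum over
`(k, r)` is visibly symmetric in `(m, n)`. Since `ℤ[q^{±1/2}]` is a domain of characteristic zero,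
the factor `2` cancels.
-/

open Finset LaurentPolynomial

noncomputable section

instance : CharZero R := charZero_of_injective_ringHom Polynomial.toLaurent_injective

namespace LaurentPolynomial

lemma T_injective {S : Type*} [Semiring S] [Nontrivial S] :
    Function.Injective (T : ℤ → S[T;T⁻¹]) := fun i j h => by
  simpa using congrArg degree h

lemma T_sum {S ι : Type*} [CommSemiring S] (s : Finset ι) (f : ι → ℤ) :
    (T (∑ i ∈ s, f i) : S[T;T⁻¹]) = ∏ i ∈ s, T (f i) := by
  classical
  induction s using Finset.induction with
  | empty => simp
  | insert i s hi ih => rw [prod_insert hi, sum_insert hi, T_add, ih]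

end LaurentPolynomial

lemma neg_one_pow_sub_of_odd {S : Type*} [Ring S] {N k : ℕ} (hN : Odd N) (hk : k ≤ N) :
    (-1 : S) ^ (N - k) = -(-1) ^ k := by
  rcases Nat.even_or_odd k with he | ho
  · rw [he.neg_one_pow, (Nat.Odd.sub_even hk hN he).neg_one_pow]
  · rw [ho.neg_one_pow, (Nat.Odd.sub_odd hN ho).neg_one_pow, neg_neg]

lemma qint_zero : qint 0 = 0 := by simp [qint]

lemma qint_neg (i : ℤ) : qint (-i) = -qint i := by simp [qint]

lemma qint_ne_zero {i : ℤ} (h : i ≠ 0) : qint i ≠ 0 := by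
  rw [qint, sub_ne_zero]
  exact T_injective.ne (by omega)

lemma qfall_add (a : ℤ) (n l : ℕ) : qfall a (n + l) = qfall a n * qfall (a - n) l := by
  simp only [qfall, prod_range_add, Nat.cast_add, sub_sub]

lemma qfall_succ (a : ℤ) (n : ℕ) : qfall a (n + 1) = qfall a n * qint (a - n) :=
  prod_range_succ _ _

lemma qfall_succ' (a : ℤ) (n : ℕ) : qfall a (n + 1) = qint a * qfall (a - 1) n := by
  rw [add_comm, qfall_add]
  simp [qfall]

lemma qfact_succ (n : ℕ) : qfact (n + 1) = qint (n + 1) * qfact n := by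
  rw [qfact, qfact, Nat.cast_succ, qfall_succ', add_sub_cancel_right]

lemma qfact_ne_zero (n : ℕ) : qfact n ≠ 0 := by
  induction n with
  | zero => simp [qfact, qfall]
  | succ n ih => exact qfact_succ n ▸ mul_ne_zero (qint_ne_zero (by omega)) ih

lemma qfact_add (n l : ℕ) : qfact (n + l) = qfall ↑(n + l) n * qfact l := by
  rw [qfact, qfact, qfall_add, Nat.cast_add, add_sub_cancel_left]

lemma qfall_odd_sub (n : ℕ) (c : ℤ) :
    qfall (n - c) (2 * n + 1) = -qfall (n + c) (2 * n + 1) := by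
  rw [qfall, ← prod_range_reflect]
  have reflect : ∀ j ∈ range (2 * n + 1),
      qint (n - c - ↑(2 * n + 1 - 1 - j)) = -qint (n + c - j) := by
    intro j hj
    rw [← qint_neg]
    congr 1
    have := mem_range.mp hj
    omega
  rw [prod_congr rfl reflect, prod_neg, card_range, (odd_two_mul_add_one n).neg_one_pow, qfall,
    neg_one_mul]

lemma qbinom_succ_succ (i n : ℕ) :
    qbinom (i + 1) (n + 1) = T (-((i : ℤ) - n)) * qbinom i n + T ((n : ℤ) + 1) * qbinom i (n + 1) :=
  rfl

lemma qbinom_eq_zero {i n : ℕ} (h : i < n) : qbinom i n = 0 := by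
  induction i generalizing n with
  | zero => obtain ⟨n, rfl⟩ := Nat.exists_eq_succ_of_ne_zero h.ne'; rfl
  | succ i ih =>
    obtain ⟨n, rfl⟩ := Nat.exists_eq_succ_of_ne_zero (by omega : n ≠ 0)
    rw [qbinom_succ_succ, ih (by omega), ih (by omega)]
    simp

lemma T_neg_mul_qint_add_T_mul_qint (a b : ℤ) :
    T (-b) * qint a + T a * qint b = qint (a + b) := by
  simp only [qint, mul_sub, ← T_add]
  ring_nf

lemma qbinom_mul_qfact (i n : ℕ) : qbinom i n * qfact n = qfall i n := by
  induction i generalizing n with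
  | zero =>
    cases n with
    | zero => simp [qbinom, qfact, qfall]
    | succ n => simp [qbinom, qfall_succ', qint_zero]
  | succ i ih =>
    cases n with
    | zero => simp [qbinom, qfact, qfall]
    | succ n =>
      have pascal := T_neg_mul_qint_add_T_mul_qint ((n : ℤ) + 1) ((i : ℤ) - n)
      rw [show (n : ℤ) + 1 + (i - n) = i + 1 by ring] at pascal
      have hn := ih n
      have hn1 := ih (n + 1)
      rw [qfact_succ, ← mul_assoc, mul_comm _ (qint _), mul_assoc, qfall_succ] at hn1
      rw [qbinom_succ_succ, qfact_succ, Nat.cast_succ, qfall_succ', add_sub_cancel_right,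
        ← pascal]
      linear_combination (T (-((i : ℤ) - n)) * qint ((n : ℤ) + 1)) * hn + T ((n : ℤ) + 1) * hn1

lemma qbinom_add_symm (k l : ℕ) : qbinom (k + l) k = qbinom (k + l) l := by
  apply mul_right_cancel₀ (mul_ne_zero (qfact_ne_zero k) (qfact_ne_zero l))
  rw [← mul_assoc, qbinom_mul_qfact, mul_comm (qfact k), ← mul_assoc, qbinom_mul_qfact,
    ← qfact_add, add_comm k l, ← qfact_add]

lemma sum_qbinom_succ_mul_pow (N : ℕ) (x : R) :
    ∑ r ∈ range (N + 2), qbinom (N + 1) r * x ^ r =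
      (∑ r ∈ range (N + 1), qbinom N r * (T 1 * x) ^ r) * (1 + T (-N) * x) := by
  set g : ℕ → R := fun r => qbinom N r * (T 1 * x) ^ r
  have shift : ∑ r ∈ range (N + 1), g r = ∑ r ∈ range (N + 1), g (r + 1) + 1 := by
    have vanish : g (N + 1) = 0 := by simp [g, qbinom_eq_zero (Nat.lt_succ_self N)]
    rw [← add_zero (∑ r ∈ range (N + 1), g r), ← vanish, ← sum_range_succ, sum_range_succ']
    simp [g, qbinom]
  rw [sum_range_succ', mul_add, mul_one, sum_mul, shift, add_right_comm, ← sum_add_distrib]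
  congr 1
  · refine sum_congr rfl fun r _ => ?_
    simp only [g, qbinom_succ_succ, mul_pow, T_pow, mul_one, Nat.cast_succ]
    rw [show (T (-((N : ℤ) - r)) : R) = T r * T (-N) by rw [← T_add]; ring_nf]
    ring
  · simp [qbinom]

theorem prod_one_add_T_mul_eq_sum_qbinom (N : ℕ) (x : R) :
    ∏ j ∈ range N, (1 + T ((N : ℤ) - 1 - 2 * j) * x) = ∑ r ∈ range (N + 1), qbinom N r * x ^ r := by
  induction N generalizing x with
  | zero => simp [qbinom]
  | succ N ih =>
    rw [sum_qbinom_succ_mul_pow, ← ih, prod_range_succ]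
    congr 1
    · refine prod_congr rfl fun j _ => ?_
      rw [← mul_assoc, ← T_add]
      push_cast
      ring_nf
    · push_cast
      ring_nf

lemma sum_range_cast_sub_sub (n : ℕ) (c : ℤ) :
    ∑ j ∈ range (2 * n + 1), ((j : ℤ) - n - c) = -(2 * n + 1) * c := by
  have gauss := sum_range_id_mul_two (2 * n + 1)
  rw [Nat.add_sub_cancel] at gauss
  rw [sum_sub_distrib, sum_sub_distrib, ← Nat.cast_sum]
  simp only [sum_const, card_range, nsmul_eq_mul]
  have : ((∑ i ∈ range (2 * n + 1), i : ℕ) : ℤ) * 2 = (2 * n + 1) * (2 * n) := by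
    exact_mod_cast gauss
  push_cast
  linarith

theorem qfall_odd_eq_sum (n : ℕ) (c : ℤ) :
    qfall (n + c) (2 * n + 1) =
      -∑ r ∈ range (2 * n + 2), (-1) ^ r * qbinom (2 * n + 1) r * T ((2 * r - 2 * n - 1) * c) := by
  have factor : ∀ j ∈ range (2 * n + 1), qint (n + c - j) =
      -T (j - n - c) * (1 + T (((2 * n + 1 : ℕ) : ℤ) - 1 - 2 * j) * -T (2 * c)) := by
    intro j _
    simp only [qint, mul_add, mul_neg, neg_mul, mul_one, ← T_add]
    push_cast
    ring_nf
  rw [qfall, prod_congr rfl factor, prod_mul_distrib, prod_one_add_T_mul_eq_sum_qbinom, prod_neg,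
    card_range, (odd_two_mul_add_one n).neg_one_pow, ← T_sum, sum_range_cast_sub_sub, mul_sum,
    ← sum_neg_distrib]
  refine sum_congr rfl fun r _ => ?_
  rw [neg_pow, T_pow, show (2 * r - 2 * n - 1) * c = -(2 * n + 1) * c + r * (2 * c) by ring, T_add]
  ring

/-- Reflecting `k ↦ 2m+1-k` fixes each summand, so the sum over all `k ≤ 2m+1` doubles `α`. -/
lemma two_mul_qfact_mul_qalpha (m n : ℕ) :
    2 * (qfact (2 * n + 1) * qalpha m n) =
      ∑ k ∈ range (2 * m + 2),
        (-1) ^ k * qbinom (2 * m + 1) k * qfall (n + (2 * m + 1 - 2 * k : ℤ)) (2 * n + 1) := by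
  set f : ℕ → R := fun k =>
    (-1) ^ k * qbinom (2 * m + 1) k * qfall (n + (2 * m + 1 - 2 * k : ℤ)) (2 * n + 1)
  have half : qfact (2 * n + 1) * qalpha m n = ∑ k ∈ range (m + 1), f k := by
    rw [qalpha, mul_sum]
    refine sum_congr rfl fun k hk => ?_
    have := mem_range.mp hk
    simp only [f]
    rw [show (n : ℤ) + (2 * m + 1 - 2 * k) = ((2 * m + n + 1 - 2 * k : ℕ) : ℤ) by omega,
      ← qbinom_mul_qfact]
    ring
  have mirror : ∀ k ∈ range (m + 1), f (m + 1 + (m + 1 - 1 - k)) = f k := by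
    intro k hk
    have := mem_range.mp hk
    have symm := qbinom_add_symm k (2 * m + 1 - k)
    rw [Nat.add_sub_cancel' (by omega)] at symm
    simp only [f]
    rw [show m + 1 + (m + 1 - 1 - k) = 2 * m + 1 - k by omega, ← symm,
      neg_one_pow_sub_of_odd (odd_two_mul_add_one m) (by omega),
      show (n : ℤ) + (2 * m + 1 - 2 * ↑(2 * m + 1 - k)) = n - (2 * m + 1 - 2 * k) by omega,
      qfall_odd_sub]
    ring
  rw [show 2 * m + 2 = (m + 1) + (m + 1) by ring, sum_range_add,
    ← sum_range_reflect (fun k => f (m + 1 + k)), sum_congr rfl mirror, half, two_mul]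

def crossSum (m n : ℕ) : R :=
  ∑ k ∈ range (2 * m + 2), ∑ r ∈ range (2 * n + 2),
    (-1) ^ k * (-1) ^ r * qbinom (2 * m + 1) k * qbinom (2 * n + 1) r *
      T (-((2 * m + 1 - 2 * k) * (2 * n + 1 - 2 * r)))

lemma crossSum_comm (m n : ℕ) : crossSum m n = crossSum n m := by
  rw [crossSum, crossSum, sum_comm]
  refine sum_congr rfl fun r _ => sum_congr rfl fun k _ => ?_
  ring_nf

lemma two_mul_qfact_mul_qalpha_eq_neg_crossSum (m n : ℕ) :
    2 * (qfact (2 * n + 1) * qalpha m n) = -crossSum m n := by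
  rw [two_mul_qfact_mul_qalpha, crossSum, ← sum_neg_distrib]
  refine sum_congr rfl fun k _ => ?_
  rw [qfall_odd_eq_sum, mul_neg, mul_sum, neg_inj]
  refine sum_congr rfl fun r _ => ?_
  ring_nf

/-- The symmetry as an explicit quantum binomial identity. -/
theorem stmt_9 (m n : ℕ) :
    qfact (2 * n + 1) *
      ∑ k ∈ Finset.range (m + 1),
        (-1 : R) ^ k * qbinom (2 * m + 1) k * qbinom (2 * m + n + 1 - 2 * k) (2 * n + 1)
    = qfact (2 * m + 1) *
      ∑ k ∈ Finset.range (n + 1),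
        (-1 : R) ^ k * qbinom (2 * n + 1) k * qbinom (2 * n + m + 1 - 2 * k) (2 * m + 1) := by
  change qfact (2 * n + 1) * qalpha m n = qfact (2 * m + 1) * qalpha n m
  apply mul_left_cancel₀ (two_ne_zero : (2 : R) ≠ 0)
  rw [two_mul_qfact_mul_qalpha_eq_neg_crossSum, two_mul_qfact_mul_qalpha_eq_neg_crossSum,
    crossSum_comm]
end
end
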